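/- arXiv:2212.07230 — 3 statements merged into one kernel-verified Lean document; each statement's English description precedes it below -/
import Mathlib

section
/- Let N be a network, N' the network obtained by adding a super-source S' connected to the old source S by μ(N) parallel edges, and A an alphabet. If (A^{μ(N)}, F) is an unambiguous pair for (N', A), where F includes a function F_S : A^{μ(N)} → A^{|out(S)|} at the old source S, then (C, F \ {F_S'}) is an unambiguous pair for (N, A), where C = { F_S(x) : x ∈ A^{μ(N)} }. In particular C has size |A|^{μ(N)} and the one-shot capacity of (N, A) equals μ(N). -/
/-- A (single-source multicast) network: a directed multigraph with edge set `E`,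
vertex set `V`, tail/head maps, a source `S` and a set of terminals `T`. -/
structure Network (V E : Type) where
  tl : E → V
  hd : E → V
  S : V
  T : Set V

namespace Network

variable {V E A : Type}

/-- The outgoing edges of a vertex. -/
def outE (N : Network V E) (v : V) : Set E := {e | N.tl e = v}

/-- The incoming edges of a vertex. -/
def inE (N : Network V E) (v : V) : Set E := {e | N.hd e = v}

/-- The network is acyclic: no directed cycle through the vertices. -/
def Acyclic (N : Network V E) : Prop :=
  ∀ v : V, ¬ Relation.TransGen (fun a b : V => ∃ e, N.tl e = a ∧ N.hd e = b) v v

/-- `p` is a (nonempty) directed path of edges from vertex `u` to vertex `v`. -/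
def IsPath (N : Network V E) (u v : V) (p : List E) : Prop :=
  p ≠ [] ∧ (∀ e ∈ p.head?, N.tl e = u) ∧ (∀ e ∈ p.getLast?, N.hd e = v) ∧
    p.Chain' (fun e e' => N.hd e = N.tl e')

/-- A set of edges is a `u`-`v` cut if every directed path from `u` to `v` meets it. -/
def IsCut (N : Network V E) (u v : V) (F : Set E) : Prop :=
  ∀ p : List E, N.IsPath u v p → ∃ e ∈ p, e ∈ F

/-- The minimum size of an edge cut between `u` and `v`. -/
noncomputable def minCut (N : Network V E) (u v : V) : ℕ :=
  sInf {n | ∃ F : Finset E, F.card = n ∧ N.IsCut u v ↑F}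

/-- `μ(N)`: the minimum over all terminals of the source-terminal min-cut. -/
noncomputable def mu (N : Network V E) : ℕ :=
  sInf {n | ∃ t ∈ N.T, N.minCut N.S t = n}

/-- A network code: a local processing function at every vertex, mapping the
incoming alphabet symbols to the outgoing alphabet symbols. -/
def Code (N : Network V E) (A : Type) : Type :=
  ∀ v : V, (N.inE v → A) → (N.outE v → A)

/-- An edge labelling `ℓ` is consistent with the network code `F` and the source
output `s`: the source emits `s`, and each intermediate vertex applies its local rule. -/
def Consistent (N : Network V E) (F : N.Code A) (s : N.outE N.S → A) (ℓ : E → A) : Prop :=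
  (∀ e : N.outE N.S, ℓ ↑e = s e) ∧
    ∀ v : V, v ≠ N.S → v ∉ N.T → ∀ e : N.outE v, ℓ ↑e = F v (fun e' => ℓ ↑e') e

/-- The pair `(C, F)` of an outer code and a network code is unambiguous:
every terminal can uniquely recover the codeword from its incoming symbols. -/
def Unambiguous (N : Network V E) (F : N.Code A) (C : Set (N.outE N.S → A)) : Prop :=
  ∀ t ∈ N.T, ∀ c ∈ C, ∀ c' ∈ C, ∀ ℓ ℓ' : E → A,
    N.Consistent F c ℓ → N.Consistent F c' ℓ' →
      (∀ e : N.inE t, ℓ ↑e = ℓ' ↑e) → c = c'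

/-- The one-shot capacity of a network with respect to the alphabet `A`. -/
noncomputable def C1 (N : Network V E) (A : Type) [Fintype A] : ℝ :=
  sSup {x : ℝ | ∃ (C : Set (N.outE N.S → A)) (F : N.Code A),
    C.Nonempty ∧ N.Unambiguous F C ∧ x = Real.logb (Fintype.card A) C.ncard}

/-- The one-shot linear capacity of a network with respect to the field `A`. -/
noncomputable def C1lin (N : Network V E) (A : Type) [Field A] [Fintype A] : ℝ :=
  sSup {x : ℝ | ∃ (C : Set (N.outE N.S → A)) (F : N.Code A),
    C.Nonempty ∧ (∀ v, IsLinearMap A (F v)) ∧ N.Unambiguous F C ∧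
      x = Real.logb (Fintype.card A) C.ncard}

/-- The network obtained by adding a super-source `S' = none` joined to the old
source by `k` parallel edges. -/
def addSuper (N : Network V E) (k : ℕ) : Network (Option V) (E ⊕ Fin k) where
  tl := Sum.elim (fun e => some (N.tl e)) (fun _ => none)
  hd := Sum.elim (fun e => some (N.hd e)) (fun _ => some N.S)
  S := none
  T := some '' N.T

end Network

namespace Network

variable {V E A : Type}

/-- Restriction of a network code for `N' = N.addSuper k` to a network code for `N`. -/
noncomputable def restrictCode (N : Network V E) (k : ℕ) [Nonempty A]
    (F' : (N.addSuper k).Code A) : N.Code A :=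
  fun v x e =>
    F' (some v)
      (fun e' =>
        match e' with
        | ⟨Sum.inl e'', h⟩ => x ⟨e'', by simpa [Network.addSuper, Network.inE] using h⟩
        | ⟨Sum.inr _, _⟩ => Classical.arbitrary A)
      ⟨Sum.inl e.1, by simpa [Network.addSuper, Network.outE] using congrArg some e.2⟩

/-- The codeword of `N` obtained by applying the local function of the old source
`S` (inside `N' = N.addSuper k`) to a source word `s ∈ A^k` of the super-source. -/
noncomputable def sourceWord (N : Network V E) (k : ℕ) [Nonempty A]
    (F' : (N.addSuper k).Code A)
    (s : (N.addSuper k).outE (N.addSuper k).S → A) : N.outE N.S → A :=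
  fun e =>
    F' (some N.S)
      (fun e' =>
        match e' with
        | ⟨Sum.inl _, _⟩ => Classical.arbitrary A
        | ⟨Sum.inr i, _⟩ => s ⟨Sum.inr i, by simp [Network.addSuper, Network.outE]⟩)
      ⟨Sum.inl e.1, by simpa [Network.addSuper, Network.outE] using congrArg some e.2⟩

end Network

/-!
A labelling of `N` consistent with the restricted code extends, by writing the super-source word
on the new edges, to a labelling of `N.addSuper μ` consistent with `F'`. No terminal sees the new
edges, so unambiguity of `N.addSuper μ` recovers the super-source word from the terminal's inputs
in `N`; this gives unambiguity of the restricted pair and, applied to a single labelling serving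
two words with the same image, injectivity of `F_S`, whence `|C| = |A| ^ μ`.

Conversely, in an acyclic network two runs of a code that differ on an edge differ along a whole
path from the source to it, so the inputs of a terminal are determined by the symbols on a minimum
cut. This bounds every unambiguous code by `|A| ^ μ`, and the capacity is exactly `μ`.
-/

namespace Network

variable {V E A : Type}

def Feeds (N : Network V E) (e' e : E) : Prop := N.hd e' = N.tl e

theorem Acyclic.wellFounded_feeds [Finite E] {N : Network V E} (h : N.Acyclic) :
    WellFounded N.Feeds := by
  have hvertices : ∀ {e' e : E}, Relation.TransGen N.Feeds e' e →
      Relation.TransGen (fun a b : V => ∃ f, N.tl f = a ∧ N.hd f = b) (N.tl e') (N.tl e) := by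
    intro e' e hfeeds
    induction hfeeds with
    | single h₁ => exact .single ⟨_, rfl, h₁⟩
    | tail _ h₂ ih => exact ih.tail ⟨_, rfl, h₂⟩
  have : Std.Irrefl (Relation.TransGen N.Feeds) := ⟨fun e he => h _ (hvertices he)⟩
  exact Subrelation.wf Relation.TransGen.single (Finite.wellFounded_of_trans_of_irrefl _)

theorem IsPath.concat {N : Network V E} {u : V} {p : List E} {e : E}
    (hp : N.IsPath u (N.tl e) p) :
    N.IsPath u (N.hd e) (p ++ [e]) := by
  obtain ⟨hne, hhead, hlast, hchain⟩ := hp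
  refine ⟨by simp, ?_, by simp, hchain.append (.singleton e) ?_⟩
  · rwa [List.head?_append_of_ne_nil _ hne]
  · rintro x hx y ⟨⟩
    exact hlast x hx

theorem isPath_singleton (N : Network V E) (e : E) : N.IsPath (N.tl e) (N.hd e) [e] :=
  ⟨List.cons_ne_nil _ _, by simp, by simp, .singleton e⟩

open Classical in
/-- Out-edges of terminals, on which `Consistent` imposes nothing, carry a fixed default symbol,
so that the labelling is a function of the source word. -/
noncomputable def canonLabel [Nonempty A] [Finite E] (N : Network V E) (hac : N.Acyclic)
    (F : N.Code A) (s : N.outE N.S → A) : E → A :=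
  hac.wellFounded_feeds.fix fun e ih =>
    if h : N.tl e = N.S then s ⟨e, h⟩
    else if N.tl e ∈ N.T then Classical.arbitrary A
    else F (N.tl e) (fun e' => ih e'.1 e'.2) ⟨e, rfl⟩

section CanonLabel

variable [Nonempty A] [Finite E] {N : Network V E} (hac : N.Acyclic) (F : N.Code A)

open Classical in
theorem canonLabel_eq (s : N.outE N.S → A) (e : E) :
    N.canonLabel hac F s e =
      if h : N.tl e = N.S then s ⟨e, h⟩
      else if N.tl e ∈ N.T then Classical.arbitrary A
      else F (N.tl e) (fun e' => N.canonLabel hac F s e'.1) ⟨e, rfl⟩ := by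
  rw [canonLabel, WellFounded.fix_eq]

theorem consistent_canonLabel (s : N.outE N.S → A) :
    N.Consistent F s (N.canonLabel hac F s) := by
  refine ⟨fun ⟨e, he⟩ => ?_, fun v hvS hvT ⟨e, he⟩ => ?_⟩
  · have he : N.tl e = N.S := he
    rw [canonLabel_eq, dif_pos he]
  · subst he
    rw [canonLabel_eq, dif_neg hvS, if_neg hvT]

theorem exists_isPath_of_canonLabel_ne {s s' : N.outE N.S → A} {e : E}
    (he : N.canonLabel hac F s e ≠ N.canonLabel hac F s' e) :
    ∃ p, N.IsPath N.S (N.hd e) p ∧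
      ∀ f ∈ p, N.canonLabel hac F s f ≠ N.canonLabel hac F s' f := by
  induction e using hac.wellFounded_feeds.induction with
  | _ e ih =>
  by_cases hS : N.tl e = N.S
  · refine ⟨[e], hS ▸ N.isPath_singleton e, fun f hf => ?_⟩
    rwa [List.mem_singleton.1 hf]
  have hT : N.tl e ∉ N.T := by
    intro hT
    rw [canonLabel_eq, canonLabel_eq, dif_neg hS, dif_neg hS, if_pos hT, if_pos hT] at he
    exact he rfl
  obtain ⟨⟨e', he'⟩, hne⟩ : ∃ e' : N.inE (N.tl e),
      N.canonLabel hac F s e' ≠ N.canonLabel hac F s' e' := by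
    by_contra! hall
    rw [canonLabel_eq, canonLabel_eq, dif_neg hS, dif_neg hS, if_neg hT, if_neg hT, funext hall]
      at he
    exact he rfl
  obtain ⟨p, hp, hdiff⟩ := ih e' he' hne
  refine ⟨p ++ [e], (he' ▸ hp).concat, fun f hf => ?_⟩
  rcases List.mem_append.1 hf with hf | hf
  · exact hdiff f hf
  · rwa [List.mem_singleton.1 hf]

end CanonLabel

theorem exists_isCut_card_eq_minCut [Fintype E] (N : Network V E) (u v : V) :
    ∃ C : Finset E, C.card = N.minCut u v ∧ N.IsCut u v C := by
  have huniv : N.IsCut u v (Finset.univ : Finset E) := fun p hp =>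
    (List.exists_mem_of_ne_nil p hp.1).imp fun e he => ⟨he, by simp⟩
  exact Nat.sInf_mem (s := {n | ∃ C : Finset E, C.card = n ∧ N.IsCut u v C})
    ⟨_, _, rfl, huniv⟩

theorem exists_minCut_eq_mu {N : Network V E} (hT : N.T.Nonempty) :
    ∃ t ∈ N.T, N.minCut N.S t = N.mu :=
  Nat.sInf_mem (hT.image fun t => N.minCut N.S t)

theorem Unambiguous.ncard_le_pow_card_of_isCut [Nonempty A] [Fintype E] [Fintype A]
    {N : Network V E} (hac : N.Acyclic) {F : N.Code A} {C : Set (N.outE N.S → A)}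
    (hU : N.Unambiguous F C) {t : V} (ht : t ∈ N.T) {cut : Finset E}
    (hcut : N.IsCut N.S t cut) :
    C.ncard ≤ Fintype.card A ^ cut.card := by
  have hinj : Function.Injective fun c : C => fun e : cut => N.canonLabel hac F c e := by
    rintro ⟨c, hc⟩ ⟨c', hc'⟩ hcut_eq
    refine Subtype.ext (hU t ht c hc c' hc' _ _ (consistent_canonLabel hac F c)
      (consistent_canonLabel hac F c') fun ⟨e, he⟩ => ?_)
    by_contra hne
    obtain ⟨p, hp, hdiff⟩ := exists_isPath_of_canonLabel_ne hac F hne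
    obtain ⟨f, hfp, hfcut⟩ := hcut p (he ▸ hp)
    exact hdiff f hfp (congrFun hcut_eq ⟨f, hfcut⟩)
  calc C.ncard = Nat.card C := (Nat.card_coe_set_eq C).symm
    _ ≤ Nat.card (cut → A) := Nat.card_le_card_of_injective _ hinj
    _ = Fintype.card A ^ cut.card := by
      rw [Nat.card_fun, Nat.card_eq_fintype_card, Nat.card_eq_fintype_card, Fintype.card_coe]

theorem Unambiguous.ncard_le_pow_mu [Nonempty A] [Fintype E] [Fintype A]
    {N : Network V E} (hac : N.Acyclic) (hT : N.T.Nonempty) {F : N.Code A}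
    {C : Set (N.outE N.S → A)} (hU : N.Unambiguous F C) :
    C.ncard ≤ Fintype.card A ^ N.mu := by
  obtain ⟨t, ht, hmu⟩ := exists_minCut_eq_mu hT
  obtain ⟨cut, hcard, hcut⟩ := N.exists_isCut_card_eq_minCut N.S t
  rw [← hmu, ← hcard]
  exact hU.ncard_le_pow_card_of_isCut hac ht hcut

theorem C1_eq_mu [Nonempty A] [Fintype E] [Fintype A] {N : Network V E}
    (hA : 2 ≤ Fintype.card A) (hac : N.Acyclic) (hT : N.T.Nonempty) {F : N.Code A}
    {C : Set (N.outE N.S → A)} (hC : C.Nonempty) (hU : N.Unambiguous F C)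
    (hcard : C.ncard = Fintype.card A ^ N.mu) :
    N.C1 A = N.mu := by
  have hA' : (1 : ℝ) < Fintype.card A := by exact_mod_cast hA
  have logb_pow_self (n : ℕ) :
      Real.logb (Fintype.card A) ((Fintype.card A ^ n : ℕ) : ℝ) = n := by
    rw [Nat.cast_pow, Real.logb_pow, Real.logb_self_eq_one hA', mul_one]
  refine IsGreatest.csSup_eq ⟨⟨C, F, hC, hU, by rw [hcard, logb_pow_self]⟩, ?_⟩
  rintro x ⟨C', F', hC', hU', rfl⟩
  rw [← logb_pow_self N.mu]
  refine Real.logb_le_logb_of_le hA' ?_ (by exact_mod_cast hU'.ncard_le_pow_mu hac hT)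
  exact_mod_cast (Set.ncard_pos (Set.toFinite C')).2 hC'

section SuperSource

variable [Nonempty A] {k : ℕ} {N : Network V E} (F' : (N.addSuper k).Code A)

def extendLabel (ℓ : E → A) (s : (N.addSuper k).outE (N.addSuper k).S → A) :
    E ⊕ Fin k → A :=
  Sum.elim ℓ fun i => s ⟨Sum.inr i, rfl⟩

theorem restrictCode_eq_of_ne_S (ℓ : E → A) (s : (N.addSuper k).outE (N.addSuper k).S → A)
    {e : E} (hS : N.tl e ≠ N.S) :
    N.restrictCode k F' (N.tl e) (fun e' => ℓ e') ⟨e, rfl⟩ =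
      F' (some (N.tl e)) (fun e' => extendLabel ℓ s e') ⟨Sum.inl e, rfl⟩ := by
  refine congrFun (congrArg (F' _) (funext fun ⟨e', he'⟩ => ?_)) _
  cases e' with
  | inl f => rfl
  | inr i => exact absurd (Option.some_injective _ he').symm hS

/-- Since no edge of `N` enters the old source, its only inputs in `N.addSuper k` are the new
edges, which carry the super-source word. -/
theorem sourceWord_eq (hS : ∀ e, N.hd e ≠ N.S) (ℓ : E → A)
    (s : (N.addSuper k).outE (N.addSuper k).S → A) {e : E} (he : N.tl e = N.S) :
    N.sourceWord k F' s ⟨e, he⟩ =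
      F' (some N.S) (fun e' => extendLabel ℓ s e') ⟨Sum.inl e, congrArg some he⟩ := by
  refine congrFun (congrArg (F' _) (funext fun ⟨e', he'⟩ => ?_)) _
  cases e' with
  | inl f => exact absurd (Option.some_injective _ he') (hS f)
  | inr i => rfl

theorem Consistent.extendLabel (hS : ∀ e, N.hd e ≠ N.S)
    {s : (N.addSuper k).outE (N.addSuper k).S → A} {ℓ : E → A}
    (hc : N.Consistent (N.restrictCode k F') (N.sourceWord k F' s) ℓ) :
    (N.addSuper k).Consistent F' s (extendLabel ℓ s) := by
  refine ⟨fun ⟨e, he⟩ => ?_, fun v hvS hvT ⟨e, he⟩ => ?_⟩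
  · cases e with
    | inl f => exact absurd he (Option.some_ne_none _)
    | inr i => rfl
  cases e with
  | inr i => exact absurd he.symm hvS
  | inl f =>
    by_cases hfS : N.tl f = N.S
    · obtain rfl : v = some N.S := he.symm.trans (congrArg some hfS)
      exact (hc.1 ⟨f, hfS⟩).trans (sourceWord_eq F' hS ℓ s hfS)
    · obtain rfl : some (N.tl f) = v := he
      exact (hc.2 _ hfS (fun h => hvT ⟨_, h, rfl⟩) ⟨f, rfl⟩).trans
        (restrictCode_eq_of_ne_S F' ℓ s hfS)

theorem eq_of_consistent_restrictCode (hST : N.S ∉ N.T) (hS : ∀ e, N.hd e ≠ N.S)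
    (hF' : (N.addSuper k).Unambiguous F' Set.univ) {t : V} (ht : t ∈ N.T)
    {s s' : (N.addSuper k).outE (N.addSuper k).S → A} {ℓ ℓ' : E → A}
    (hc : N.Consistent (N.restrictCode k F') (N.sourceWord k F' s) ℓ)
    (hc' : N.Consistent (N.restrictCode k F') (N.sourceWord k F' s') ℓ')
    (hagree : ∀ e : N.inE t, ℓ e = ℓ' e) :
    s = s' := by
  refine hF' (some t) ⟨t, ht, rfl⟩ s trivial s' trivial _ _ (hc.extendLabel F' hS)
    (hc'.extendLabel F' hS) fun ⟨e, he⟩ => ?_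
  cases e with
  | inl f => exact hagree ⟨f, Option.some_injective _ he⟩
  | inr i => exact absurd ((Option.some_injective _ he).symm ▸ ht) hST

theorem unambiguous_restrictCode (hST : N.S ∉ N.T) (hS : ∀ e, N.hd e ≠ N.S)
    (hF' : (N.addSuper k).Unambiguous F' Set.univ) :
    N.Unambiguous (N.restrictCode k F') (Set.range (N.sourceWord k F')) := by
  rintro t ht c ⟨s, rfl⟩ c' ⟨s', rfl⟩ ℓ ℓ' hc hc' hagree
  rw [eq_of_consistent_restrictCode F' hST hS hF' ht hc hc' hagree]

theorem sourceWord_injective [Finite E] (hac : N.Acyclic) (hT : N.T.Nonempty)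
    (hST : N.S ∉ N.T) (hS : ∀ e, N.hd e ≠ N.S)
    (hF' : (N.addSuper k).Unambiguous F' Set.univ) :
    Function.Injective (N.sourceWord k F') := by
  intro s s' hss'
  obtain ⟨t, ht⟩ := hT
  have hc := consistent_canonLabel hac (N.restrictCode k F') (N.sourceWord k F' s)
  exact eq_of_consistent_restrictCode F' hST hS hF' ht hc (hss' ▸ hc) fun _ => rfl

theorem ncard_range_sourceWord [Fintype E] [Fintype A]
    (hinj : Function.Injective (N.sourceWord k F')) :
    (Set.range (N.sourceWord k F')).ncard = Fintype.card A ^ k := by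
  have hout :
      (N.addSuper k).outE (N.addSuper k).S = Set.range (Sum.inr : Fin k → E ⊕ Fin k) := by
    ext e
    cases e <;> simp [Network.addSuper, Network.outE]
  rw [← Nat.card_coe_set_eq, Nat.card_range_of_injective hinj, Nat.card_fun, hout,
    Nat.card_range_of_injective Sum.inr_injective, Nat.card_eq_fintype_card,
    Nat.card_eq_fintype_card, Fintype.card_fin]

end SuperSource

end Network

open Network in
theorem supersource_trick_general {V E A : Type} [Fintype E] [Fintype A] [Nonempty A]
    (N : Network V E) (hA : 2 ≤ Fintype.card A)
    (hacyclic : N.Acyclic) (hT : N.T.Nonempty) (hST : N.S ∉ N.T)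
    (hS : ∀ e, N.hd e ≠ N.S)
    (F' : (N.addSuper N.mu).Code A)
    (hF' : (N.addSuper N.mu).Unambiguous F' Set.univ) :
    N.Unambiguous (N.restrictCode N.mu F') (Set.range (N.sourceWord N.mu F')) ∧
      (Set.range (N.sourceWord N.mu F')).ncard = Fintype.card A ^ N.mu ∧
      N.C1 A = N.mu := by
  have hunamb := unambiguous_restrictCode F' hST hS hF'
  have hcard := ncard_range_sourceWord F' (sourceWord_injective F' hacyclic hT hST hS hF')
  exact ⟨hunamb, hcard, C1_eq_mu hA hacyclic hT (Set.range_nonempty _) hunamb hcard⟩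

open Network in
/-- Super-source trick: if `(A^{μ(N)}, F')` is unambiguous for the network
`N' = N.addSuper μ(N)` obtained by adding a super-source, then the code
`C = { F_S(x) : x ∈ A^{μ(N)} }` together with the restricted network code is
unambiguous for `N`; in particular `|C| = |A|^{μ(N)}` and the one-shot capacity
of `(N, A)` equals `μ(N)`. -/
theorem supersource_trick {V E A : Type} [Fintype V] [Fintype E] [Fintype A] [Nonempty A]
    (N : Network V E) (hA : 2 ≤ Fintype.card A)
    (hacyclic : N.Acyclic) (hT : N.T.Nonempty) (hST : N.S ∉ N.T)
    (hS : ∀ e, N.hd e ≠ N.S)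
    (F' : (N.addSuper N.mu).Code A)
    (hF' : (N.addSuper N.mu).Unambiguous F' Set.univ) :
    N.Unambiguous (N.restrictCode N.mu F') (Set.range (N.sourceWord N.mu F')) ∧
      (Set.range (N.sourceWord N.mu F')).ncard = Fintype.card A ^ N.mu ∧
      N.C1 A = N.mu :=
  supersource_trick_general N hA hacyclic hT hST hS F' hF'
end

section
/- Let V be an intermediate vertex of a network N with exactly one incoming edge. Then there exists an unambiguous pair (C, F) for (N, A) if and only if there exists an unambiguous pair (C, F') for (N, A) in which the function F'_V : A → A^{|out(V)|} is the replication (routing) map a ↦ (a, a, ..., a). Consequently, the one-shot capacity of N is attained by network codes that use routing at all vertices with in-degree one. -/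
/-
Routing at an in-degree-one vertex `v` loses nothing: the local function of `v` can be pushed
into its successors, which apply it to the replicated symbol themselves (`absorb`). A labelling
consistent with the new code becomes one consistent with the old code by re-applying `F_v` on
the out-edges of `v`; both agree on every other edge, so terminals still decode. Doing this at
the in-degree-one vertices in a topological order (later steps only change later vertices)
gives a code that routes at all of them; starting from a code that attains the (finite)
supremum defining the one-shot capacity keeps that capacity attained.
-/

namespace Network

variable {V E A : Type}

def Adj (N : Network V E) (u w : V) : Prop := ∃ e, N.tl e = u ∧ N.hd e = w

def IsRelay (N : Network V E) (w : V) : Prop := w ≠ N.S ∧ w ∉ N.T ∧ ∃! e, e ∈ N.inE w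

def RoutesAt {N : Network V E} (F : N.Code A) (w : V) : Prop :=
  ∀ (x : N.inE w → A) (e : N.outE w) (e' : N.inE w), F w x e = x e'

open Classical in
noncomputable def absorb {N : Network V E} (F : N.Code A) (v : V) (e₀ : N.inE v) : N.Code A :=
  fun w x =>
    if hw : w = v then fun _ => x ⟨e₀, hw ▸ e₀.2⟩
    else F w fun e => if h : N.tl e = v then F v (fun _ => x e) ⟨e, h⟩ else x e

section Absorb

variable {N : Network V E} {F : N.Code A} {v : V} {e₀ : N.inE v} {s : N.outE N.S → A}
  {ℓ : E → A}

theorem absorb_routesAt (huniq : ∀ e : N.inE v, e = e₀) : RoutesAt (absorb F v e₀) v := by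
  intro x e e'
  simp [absorb, huniq e']

theorem absorb_of_not_adj {w : V} (hwv : w ≠ v) (hadj : ¬ N.Adj v w) :
    absorb F v e₀ w = F w := by
  funext x e
  simp only [absorb, dif_neg hwv]
  congr 1
  funext e'
  rw [dif_neg fun h => hadj ⟨e', h, e'.2⟩]

theorem Consistent.absorb_eq (hvS : v ≠ N.S) (hvT : v ∉ N.T)
    (hℓ : N.Consistent (absorb F v e₀) s ℓ) {e : E} (he : N.tl e = v) : ℓ e = ℓ e₀ := by
  rw [hℓ.2 v hvS hvT ⟨e, he⟩]
  simp [absorb]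

open Classical in
theorem Consistent.of_absorb (hvS : v ≠ N.S) (hvT : v ∉ N.T) (huniq : ∀ e : N.inE v, e = e₀)
    (hloop : N.tl e₀ ≠ v) (hℓ : N.Consistent (absorb F v e₀) s ℓ) :
    N.Consistent F s fun e =>
      if h : N.tl e = v then F v (fun _ => ℓ e₀) ⟨e, h⟩ else ℓ e := by
  refine ⟨fun e => ?_, fun w hwS hwT e => ?_⟩ <;> beta_reduce
  · rw [dif_neg fun h => hvS (h.symm.trans e.2)]
    exact hℓ.1 e
  by_cases hw : w = v
  · subst w
    have he : N.tl e = v := e.2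
    rw [dif_pos he]
    congr 1
    funext e'
    rw [huniq e', dif_neg hloop]
  · rw [dif_neg fun h => hw (e.2.symm.trans h), hℓ.2 w hwS hwT e]
    simp only [absorb, dif_neg hw]
    congr 1
    funext e'
    split_ifs with h
    · rw [hℓ.absorb_eq hvS hvT h]
    · rfl

theorem Unambiguous.absorb {C : Set (N.outE N.S → A)} (hF : N.Unambiguous F C)
    (hvS : v ≠ N.S) (hvT : v ∉ N.T) (huniq : ∀ e : N.inE v, e = e₀)
    (hloop : N.tl e₀ ≠ v) : N.Unambiguous (absorb F v e₀) C := by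
  intro t ht c hc c' hc' ℓ ℓ' hℓ hℓ' hagree
  refine hF t ht c hc c' hc' _ _ (hℓ.of_absorb hvS hvT huniq hloop)
    (hℓ'.of_absorb hvS hvT huniq hloop) fun e => ?_
  split_ifs with h
  · rw [← hℓ.absorb_eq hvS hvT h, ← hℓ'.absorb_eq hvS hvT h, hagree e]
  · exact hagree e

end Absorb

theorem Acyclic.wellFounded [Finite V] {N : Network V E} (hN : N.Acyclic) :
    WellFounded (Relation.TransGen N.Adj) :=
  have : Std.Irrefl (Relation.TransGen N.Adj) := ⟨hN⟩
  Finite.wellFounded_of_trans_of_irrefl _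

theorem IsRelay.exists_unique_inE {N : Network V E} {w : V} (hw : N.IsRelay w) :
    ∃ e₀ : N.inE w, ∀ e : N.inE w, e = e₀ := by
  obtain ⟨e₀, he₀, huniq⟩ := hw.2.2
  exact ⟨⟨e₀, he₀⟩, fun e => Subtype.ext (huniq e e.2)⟩

theorem Unambiguous.exists_routesAt {N : Network V E} (hN : N.Acyclic) {w : V}
    (hw : N.IsRelay w) {F : N.Code A} {C : Set (N.outE N.S → A)} (hF : N.Unambiguous F C) :
    ∃ F' : N.Code A, N.Unambiguous F' C ∧ RoutesAt F' w ∧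
      ∀ u, u ≠ w → ¬ N.Adj w u → F' u = F u := by
  obtain ⟨e₀, huniq⟩ := hw.exists_unique_inE
  have hloop : N.tl e₀ ≠ w := fun h => hN w (.single ⟨e₀, h, e₀.2⟩)
  exact ⟨Network.absorb F w e₀, hF.absorb hw.1 hw.2.1 huniq hloop, absorb_routesAt huniq,
    fun u hu hadj => absorb_of_not_adj hu hadj⟩

theorem Unambiguous.exists_routesAt_relays [Finite V] {N : Network V E} (hN : N.Acyclic)
    {F : N.Code A} {C : Set (N.outE N.S → A)} (hF : N.Unambiguous F C) :
    ∃ F' : N.Code A, N.Unambiguous F' C ∧ ∀ w, N.IsRelay w → RoutesAt F' w := by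
  classical
  have := Fintype.ofFinite V
  have : IsWellFounded V (Relation.TransGen N.Adj) := ⟨hN.wellFounded⟩
  suffices ∀ D : Finset V, ∃ F' : N.Code A, N.Unambiguous F' C ∧
      ∀ w ∈ D, N.IsRelay w → RoutesAt F' w by
    simpa using this Finset.univ
  intro D
  -- Adding the vertices by increasing rank, the newly treated vertex has no successor treated.
  induction D using Finset.induction_on_max_value (IsWellFounded.rank (Relation.TransGen N.Adj))
  with
  | empty => exact ⟨F, hF, by simp⟩
  | insert v D hvD hmax ih =>
    obtain ⟨F₁, hF₁, hroutes₁⟩ := ih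
    by_cases hv : N.IsRelay v
    · obtain ⟨F₂, hF₂, hroutes₂, hsame⟩ := hF₁.exists_routesAt hN hv
      refine ⟨F₂, hF₂, fun w hw hwR => ?_⟩
      rcases Finset.mem_insert.mp hw with rfl | hwD
      · exact hroutes₂
      have hwv : w ≠ v := fun h => hvD (h ▸ hwD)
      have hadj : ¬ N.Adj v w := fun hvw =>
        (hmax w hwD).not_gt (IsWellFounded.rank_lt_of_rel (.single hvw))
      simpa only [RoutesAt, hsame w hwv hadj] using hroutes₁ w hwD hwR
    · refine ⟨F₁, hF₁, fun w hw hwR => ?_⟩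
      rcases Finset.mem_insert.mp hw with rfl | hwD
      · exact absurd hwR hv
      · exact hroutes₁ w hwD hwR

theorem unambiguous_of_subsingleton {N : Network V E} (F : N.Code A)
    {C : Set (N.outE N.S → A)} (hC : C.Subsingleton) : N.Unambiguous F C :=
  fun _ _ _ hc _ hc' _ _ _ _ _ => hC hc hc'

theorem exists_unambiguous_logb_ncard_eq_C1 [Finite E] [Fintype A] [Nonempty A]
    (N : Network V E) :
    ∃ (C : Set (N.outE N.S → A)) (F : N.Code A), C.Nonempty ∧ N.Unambiguous F C ∧
      Real.logb (Fintype.card A) C.ncard = N.C1 A := by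
  set Ω := {x : ℝ | ∃ (C : Set (N.outE N.S → A)) (F : N.Code A),
    C.Nonempty ∧ N.Unambiguous F C ∧ x = Real.logb (Fintype.card A) C.ncard}
  have hne : Ω.Nonempty := by
    obtain ⟨a⟩ := ‹Nonempty A›
    exact ⟨_, {fun _ => a}, fun _ _ _ => a, Set.singleton_nonempty _,
      unambiguous_of_subsingleton _ Set.subsingleton_singleton, rfl⟩
  have hfin : Ω.Finite :=
    (Set.finite_range fun C : Set (N.outE N.S → A) => Real.logb (Fintype.card A) C.ncard).subset
      (by rintro x ⟨C, -, -, -, rfl⟩; exact ⟨C, rfl⟩)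
  obtain ⟨C, F, hC, hF, hx⟩ := hne.csSup_mem hfin
  exact ⟨C, F, hC, hF, hx.symm⟩

end Network

open Network in
/-- Routing trick: if an intermediate vertex `v` has exactly one incoming edge,
then an unambiguous pair `(C, F)` exists iff an unambiguous pair `(C, F')` exists
in which `F'_v` is the replication (routing) map. Consequently, the one-shot
capacity is attained by a network code that uses routing at all intermediate
vertices with in-degree one. -/
theorem routing_trick {V E A : Type} [Fintype V] [Fintype E] [Fintype A]
    (N : Network V E) (hA : 2 ≤ Fintype.card A) (hacyclic : N.Acyclic)
    (v : V) (hvS : v ≠ N.S) (hvT : v ∉ N.T) (hdeg : ∃! e, e ∈ N.inE v) :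
    (∀ C : Set (N.outE N.S → A), C.Nonempty →
      ((∃ F : N.Code A, N.Unambiguous F C) ↔
        (∃ F : N.Code A, N.Unambiguous F C ∧
          ∀ (x : N.inE v → A) (e : N.outE v) (e' : N.inE v), F v x e = x e'))) ∧
    (∃ (C : Set (N.outE N.S → A)) (F : N.Code A), C.Nonempty ∧ N.Unambiguous F C ∧
      (∀ w : V, w ≠ N.S → w ∉ N.T → (∃! e, e ∈ N.inE w) →
        ∀ (x : N.inE w → A) (e : N.outE w) (e' : N.inE w), F w x e = x e') ∧
      Real.logb (Fintype.card A) C.ncard = N.C1 A) := by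
  refine ⟨fun C _ => ⟨fun ⟨F, hF⟩ => ?_, fun ⟨F, hF, _⟩ => ⟨F, hF⟩⟩, ?_⟩
  · obtain ⟨F', hF', hroutes, -⟩ := hF.exists_routesAt hacyclic ⟨hvS, hvT, hdeg⟩
    exact ⟨F', hF', hroutes⟩
  · have : Nonempty A := Fintype.card_pos_iff.mp (by omega)
    obtain ⟨C, F, hC, hF, hcap⟩ := N.exists_unambiguous_logb_ncard_eq_C1 (A := A)
    obtain ⟨F', hF', hroutes⟩ := hF.exists_routesAt_relays hacyclic
    exact ⟨C, F', hC, hF', fun w hwS hwT hw => hroutes w ⟨hwS, hwT, hw⟩, hcap⟩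
end

section
/- For |A| = 3, the maximum size of a code C ⊆ A^2 for which there exist three functions f_3, f_4, f_5 : A^2 → A such that all ten pairs from {proj_1, proj_2, f_3, f_4, f_5} are injective when restricted to C is exactly 6. Hence the one-shot capacity of the (5 choose 2) combination network over a ternary alphabet is log_3 6. -/
/-- The `(5 choose 2)` combination network: a source `0`, five relay vertices
`1..5` (each joined to the source by one edge), and ten terminals `6..15`, one
for each pair of relays, each receiving one edge from each relay of its pair. -/
def comb : Network (Fin 16) (Fin 25) where
  tl := ![0, 0, 0, 0, 0,
          1, 2, 1, 3, 1, 4, 1, 5, 2, 3, 2, 4, 2, 5, 3, 4, 3, 5, 4, 5]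
  hd := ![1, 2, 3, 4, 5,
          6, 6, 7, 7, 8, 8, 9, 9, 10, 10, 11, 11, 12, 12, 13, 13, 14, 14, 15, 15]
  S := 0
  T := {6, 7, 8, 9, 10, 11, 12, 13, 14, 15}

/-- The family of five relay functions of the `(5 choose 2)` combination
network: the two coordinate projections together with `f₃, f₄, f₅`. -/
def relayFamily {A : Type} (f3 f4 f5 : A → A → A) : Fin 5 → A → A → A :=
  ![fun x _ => x, fun _ y => y, f3, f4, f5]


lemma sum3_bound {A : Type} [Fintype A] (hA : Fintype.card A = 3) (n : A → ℕ)
    (hle : ∀ a, n a ≤ 3) (hsum : ∑ a, n a = 7) :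
    10 ≤ ∑ a, (n a * n a - n a) := by
  let e := Fintype.equivFinOfCardEq hA
  rw [← Equiv.sum_comp e.symm] at hsum ⊢
  rw [Fin.sum_univ_three] at hsum ⊢
  have h0 := hle (e.symm 0)
  have h1 := hle (e.symm 1)
  have h2 := hle (e.symm 2)
  set a := n (e.symm 0)
  set b := n (e.symm 1)
  set c := n (e.symm 2)
  interval_cases a <;> interval_cases b <;> interval_cases c <;> omega

lemma keyUB {A : Type} [Fintype A] (hA : Fintype.card A = 3) (C : Finset (A × A))
    (g : Fin 5 → A × A → A)
    (hg : ∀ i j : Fin 5, i ≠ j → Set.InjOn (fun p => (g i p, g j p)) ↑C) :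
    C.card ≤ 6 := by
  classical
  by_contra h
  push_neg at h
  obtain ⟨S, hSC, hS7⟩ := Finset.exists_subset_card_eq (n := 7) (by omega : 7 ≤ C.card)
  have hg' : ∀ i j : Fin 5, i ≠ j → Set.InjOn (fun p => (g i p, g j p)) ↑S := by
    intro i j hij
    exact (hg i j hij).mono (by exact_mod_cast hSC)
  set Ai : Fin 5 → Finset ((A × A) × (A × A)) :=
    fun i => S.offDiag.filter (fun p => g i p.1 = g i p.2) with hAi
  -- each Ai has at least 10 elements
  have hcard : ∀ i, 10 ≤ (Ai i).card := by
    intro i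
    set F : A → Finset (A × A) := fun a => S.filter (fun p => g i p = a) with hF
    have hfib : ∀ a, (F a).card ≤ 3 := by
      intro a
      set j : Fin 5 := if i = 0 then 1 else 0 with hj
      have hij : j ≠ i := by
        rcases eq_or_ne i 0 with h0 | h0 <;> simp [hj, h0]
        · omega
      have : Set.InjOn (g j) (F a) := by
        intro p hp q hq hpq
        simp only [Finset.coe_filter, Set.mem_setOf_eq, hF] at hp hq
        have := hg' j i hij (by exact_mod_cast hp.1) (by exact_mod_cast hq.1)
          (by simp [hpq, hp.2, hq.2])
        exact this
      calc (F a).card ≤ Finset.univ.card :=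
            Finset.card_le_card_of_injOn (g j) (fun _ _ => Finset.mem_univ _) this
        _ = 3 := by rw [Finset.card_univ, hA]
    have hsum : ∑ a, (F a).card = 7 := by
      rw [← hS7]
      exact (Finset.card_eq_sum_card_fiberwise (f := g i) (fun x _ => Finset.mem_univ _)).symm
    have hAieq : Ai i = Finset.univ.biUnion (fun a => (F a).offDiag) := by
      ext p
      simp only [hAi, Finset.mem_filter, Finset.mem_offDiag, Finset.mem_biUnion,
        Finset.mem_univ, true_and, hF]
      constructor
      · rintro ⟨⟨h1, h2, h3⟩, h4⟩
        exact ⟨g i p.1, ⟨h1, rfl⟩, ⟨h2, h4.symm⟩, h3⟩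
      · rintro ⟨a, ⟨h1, ha1⟩, ⟨h2, ha2⟩, h3⟩
        exact ⟨⟨h1, h2, h3⟩, by rw [ha1, ha2]⟩
    have hdisj : ∀ a ∈ (Finset.univ : Finset A), ∀ b ∈ Finset.univ, a ≠ b →
        Disjoint ((F a).offDiag) ((F b).offDiag) := by
      intro a _ b _ hab
      rw [Finset.disjoint_left]
      intro p hpa hpb
      rw [Finset.mem_offDiag] at hpa hpb
      have h1 := hpa.1; have h2 := hpb.1
      simp only [hF, Finset.mem_filter] at h1 h2
      exact hab (h1.2 ▸ h2.2 ▸ rfl)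
    rw [hAieq, Finset.card_biUnion hdisj]
    have : ∀ a, ((F a).offDiag).card = (F a).card * (F a).card - (F a).card := by
      intro a; exact Finset.offDiag_card (F a)
    simp only [this]
    exact sum3_bound hA (fun a => (F a).card) hfib hsum
  -- the Ai are pairwise disjoint
  have hdisj : ∀ i ∈ (Finset.univ : Finset (Fin 5)), ∀ j ∈ Finset.univ, i ≠ j →
      Disjoint (Ai i) (Ai j) := by
    intro i _ j _ hij
    rw [Finset.disjoint_left]
    intro p hpi hpj
    simp only [hAi, Finset.mem_filter, Finset.mem_offDiag] at hpi hpj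
    exact hpi.1.2.2 (hg' i j hij (by exact_mod_cast hpi.1.1) (by exact_mod_cast hpi.1.2.1)
      (by simp [hpi.2, hpj.2]))
  have hle : (Finset.univ.biUnion Ai).card ≤ S.offDiag.card :=
    Finset.card_le_card (by
      intro p hp
      rw [Finset.mem_biUnion] at hp
      obtain ⟨i, _, hpi⟩ := hp
      exact (Finset.mem_filter.mp hpi).1)
  rw [Finset.card_biUnion hdisj] at hle
  rw [Finset.offDiag_card, hS7] at hle
  have h50 : 50 ≤ ∑ i : Fin 5, (Ai i).card := by
    calc 50 = ∑ _i : Fin 5, 10 := by simp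
      _ ≤ _ := Finset.sum_le_sum (fun i _ => hcard i)
  omega



def wC3 : Finset (Fin 3 × Fin 3) := {(0,0),(0,1),(1,0),(1,2),(2,1),(2,2)}
def wF3 : Fin 3 → Fin 3 → Fin 3 := ![![0,1,0],![1,0,2],![0,2,0]]
def wF4 : Fin 3 → Fin 3 → Fin 3 := ![![0,1,0],![2,0,0],![0,2,1]]
def wF5 : Fin 3 → Fin 3 → Fin 3 := ![![0,1,0],![2,0,1],![0,0,2]]

lemma wDec : wC3.card = 6 ∧ ∀ i j : Fin 5, i ≠ j → ∀ a ∈ wC3, ∀ b ∈ wC3,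
    relayFamily wF3 wF4 wF5 i a.1 a.2 = relayFamily wF3 wF4 wF5 i b.1 b.2 →
    relayFamily wF3 wF4 wF5 j a.1 a.2 = relayFamily wF3 wF4 wF5 j b.1 b.2 → a = b := by
  decide

lemma relay_conj {A : Type} (e : A ≃ Fin 3) (i : Fin 5) (x y : A) :
    relayFamily (fun a b => e.symm (wF3 (e a) (e b))) (fun a b => e.symm (wF4 (e a) (e b)))
      (fun a b => e.symm (wF5 (e a) (e b))) i x y
    = e.symm (relayFamily wF3 wF4 wF5 i (e x) (e y)) := by
  fin_cases i <;> simp [relayFamily]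

lemma part1 {A : Type} [Fintype A] (hA : Fintype.card A = 3) :
    ∃ (C : Finset (A × A)) (f3 f4 f5 : A → A → A), C.card = 6 ∧
      ∀ i j : Fin 5, i ≠ j →
        Set.InjOn (fun p : A × A =>
          (relayFamily f3 f4 f5 i p.1 p.2, relayFamily f3 f4 f5 j p.1 p.2)) ↑C := by
  classical
  let e : A ≃ Fin 3 := Fintype.equivFinOfCardEq hA
  refine ⟨wC3.image (fun p => (e.symm p.1, e.symm p.2)),
    fun a b => e.symm (wF3 (e a) (e b)), fun a b => e.symm (wF4 (e a) (e b)),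
    fun a b => e.symm (wF5 (e a) (e b)), ?_, ?_⟩
  · rw [Finset.card_image_of_injective _ (by
      intro p q hpq
      simp only [Prod.mk.injEq] at hpq
      exact Prod.ext (e.symm.injective hpq.1) (e.symm.injective hpq.2))]
    exact wDec.1
  · intro i j hij p hp q hq hpq
    simp only [Finset.coe_image, Set.mem_image, Finset.mem_coe] at hp hq
    obtain ⟨p0, hp0, rfl⟩ := hp
    obtain ⟨q0, hq0, rfl⟩ := hq
    simp only [Prod.mk.injEq, relay_conj, Equiv.apply_symm_apply] at hpq
    have h1 := e.symm.injective hpq.1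
    have h2 := e.symm.injective hpq.2
    have := wDec.2 i j hij p0 hp0 q0 hq0 (by simpa using h1) (by simpa using h2)
    rw [this]
open Network

-- source out-edges
def sE (k : Fin 5) : Fin 25 := ⟨k.1, by omega⟩

lemma combS : comb.S = 0 := rfl

lemma tl_sE (k : Fin 5) : comb.tl (sE k) = comb.S := by fin_cases k <;> decide

def oE (k : Fin 5) : comb.outE comb.S := ⟨sE k, tl_sE k⟩

-- terminal / in-edge tables
def term : Fin 5 → Fin 5 → Fin 16 :=
  ![![0,6,7,8,9],![6,0,10,11,12],![7,10,0,13,14],![8,11,13,0,15],![9,12,14,15,0]]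
def eIn : Fin 5 → Fin 5 → Fin 25 :=
  ![![0,5,7,9,11],![6,0,13,15,17],![8,14,0,19,21],![10,16,20,0,23],![12,18,22,24,0]]

lemma tableFacts : ∀ i j : Fin 5, i ≠ j →
    6 ≤ (term i j : ℕ) ∧ comb.hd (eIn i j) = term i j ∧
    comb.tl (eIn i j) = comb.hd (sE i) ∧ term i j = term j i ∧
    (∀ e : Fin 25, comb.hd e = term i j → e = eIn i j ∨ e = eIn j i) := by decide

lemma relay_in_src : ∀ e e' : Fin 25, comb.tl e ≠ 0 → comb.hd e' = comb.tl e →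
    comb.tl e' = 0 := by decide

lemma relay_in_uniq : ∀ (k : Fin 5) (e' : Fin 25), comb.hd e' = comb.hd (sE k) →
    e' = sE k := by decide

lemma hd_sE_ne (k : Fin 5) : comb.hd (sE k) ≠ 0 := by fin_cases k <;> decide

lemma tl_le5 : ∀ e : Fin 25, (comb.tl e : ℕ) ≤ 5 := by decide

lemma mem_T_iff : ∀ t : Fin 16, t ∈ comb.T ↔ 6 ≤ (t : ℕ) := by
  intro t
  show t ∈ ({6, 7, 8, 9, 10, 11, 12, 13, 14, 15} : Set (Fin 16)) ↔ _
  simp only [Set.mem_insert_iff, Set.mem_singleton_iff]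
  fin_cases t <;> simp

lemma term_surj : ∀ t : Fin 16, 6 ≤ (t : ℕ) → ∃ i j : Fin 5, i ≠ j ∧ t = term i j := by
  decide

variable {A : Type}

/-- The canonical labelling induced by a source word. -/
def lab (F : comb.Code A) (a0 : A) (c : comb.outE comb.S → A) : Fin 25 → A :=
  fun e => if h : comb.tl e = comb.S then c ⟨e, h⟩
    else F (comb.tl e)
      (fun e' => if h' : comb.tl e'.1 = comb.S then c ⟨e'.1, h'⟩ else a0) ⟨e, rfl⟩

lemma lab_consistent (F : comb.Code A) (a0 : A) (c : comb.outE comb.S → A) :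
    comb.Consistent F c (lab F a0 c) := by
  constructor
  · intro e
    show lab F a0 c e.1 = c e
    rw [lab, dif_pos (show comb.tl e.1 = comb.S from e.2)]
  · intro v hvS hvT e
    obtain ⟨e, he⟩ := e
    subst he
    show lab F a0 c e = _
    rw [lab, dif_neg hvS]
    congr 1
    funext e'
    have h0 : comb.tl e ≠ 0 := by rwa [combS] at hvS
    have h' : comb.tl e'.1 = comb.S := by
      rw [combS]
      exact relay_in_src e e'.1 h0 e'.2
    rw [dif_pos h', lab, dif_pos h']

lemma lab_dep (F : comb.Code A) (a0 : A) (c c' : comb.outE comb.S → A) (k : Fin 5)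
    (e : Fin 25) (he : comb.tl e = comb.hd (sE k)) (hcc : c (oE k) = c' (oE k)) :
    lab F a0 c e = lab F a0 c' e := by
  have hne : comb.tl e ≠ comb.S := by rw [combS, he]; exact hd_sE_ne k
  rw [lab, lab, dif_neg hne, dif_neg hne]
  congr 1
  funext e'
  have he' : e'.1 = sE k := relay_in_uniq k e'.1 (by rw [e'.2, he])
  have h' : comb.tl e'.1 = comb.S := by rw [he']; exact tl_sE k
  rw [dif_pos h', dif_pos h']
  have : (⟨e'.1, h'⟩ : comb.outE comb.S) = oE k := Subtype.ext he'
  rw [this, hcc]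

lemma terminal_inj (F : comb.Code A) (Cs : Set (comb.outE comb.S → A)) (a0 : A)
    (hU : comb.Unambiguous F Cs) (i j : Fin 5) (hij : i ≠ j) :
    Set.InjOn (fun c => (c (oE i), c (oE j))) Cs := by
  intro c hc c' hc' hpair
  simp only [Prod.mk.injEq] at hpair
  obtain ⟨hT6, hdA, htA, hsym, huniq⟩ := tableFacts i j hij
  obtain ⟨_, hdB, htB, _, _⟩ := tableFacts j i (Ne.symm hij)
  refine hU (term i j) ((mem_T_iff _).mpr hT6) c hc c' hc'
    (lab F a0 c) (lab F a0 c') (lab_consistent F a0 c) (lab_consistent F a0 c') ?_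
  intro e
  have he : comb.hd e.1 = term i j := e.2
  rcases huniq e.1 he with h | h
  · show lab F a0 c e.1 = lab F a0 c' e.1
    rw [h]
    exact lab_dep F a0 c c' i _ htA hpair.1
  · show lab F a0 c e.1 = lab F a0 c' e.1
    rw [h]
    exact lab_dep F a0 c c' j _ htB hpair.2

lemma src_lt5 : ∀ e : Fin 25, comb.tl e = comb.S → (e : ℕ) < 5 := by decide

def idx (k : comb.outE comb.S) : Fin 5 := ⟨k.1.1, src_lt5 k.1 k.2⟩

lemma idx_oE (k : Fin 5) : idx (oE k) = k := rfl

/-- The forwarding network code: every relay forwards its (unique) input. -/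
noncomputable def Fnet (a0 : A) : comb.Code A := fun v g _e =>
  if h : ∃ e' : Fin 25, comb.hd e' = v then g ⟨h.choose, h.choose_spec⟩ else a0

lemma consist_eval (a0 : A) (c : comb.outE comb.S → A) (ℓ : Fin 25 → A)
    (hcons : comb.Consistent (Fnet a0) c ℓ) (k : Fin 5) (e : Fin 25)
    (he : comb.tl e = comb.hd (sE k)) : ℓ e = c (oE k) := by
  have hvS : comb.tl e ≠ comb.S := by rw [combS, he]; exact hd_sE_ne k
  have hvT : comb.tl e ∉ comb.T := by
    rw [mem_T_iff]
    have := tl_le5 e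
    omega
  have h2 := hcons.2 (comb.tl e) hvS hvT ⟨e, rfl⟩
  have hex : ∃ e' : Fin 25, comb.hd e' = comb.tl e := ⟨sE k, he.symm⟩
  rw [show ℓ e = ℓ ((⟨e, rfl⟩ : comb.outE (comb.tl e)) : Fin 25) from rfl, h2,
    Fnet, dif_pos hex]
  have hch : hex.choose = sE k := relay_in_uniq k hex.choose (by rw [hex.choose_spec, he])
  show ℓ hex.choose = c (oE k)
  rw [hch]
  exact hcons.1 (oE k)

/-- The network codeword associated to a source pair. -/
def cw (f3 f4 f5 : A → A → A) (w : A × A) : comb.outE comb.S → A :=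
  fun k => relayFamily f3 f4 f5 (idx k) w.1 w.2

lemma cw_oE (f3 f4 f5 : A → A → A) (w : A × A) (k : Fin 5) :
    cw f3 f4 f5 w (oE k) = relayFamily f3 f4 f5 k w.1 w.2 := rfl

lemma cw_inj (f3 f4 f5 : A → A → A) : Function.Injective (cw f3 f4 f5) := by
  intro w w' h
  have h0 := congrFun h (oE 0)
  have h1 := congrFun h (oE 1)
  rw [cw_oE, cw_oE] at h0 h1
  simp only [relayFamily, Matrix.cons_val_zero, Matrix.cons_val_one, Matrix.head_cons] at h0 h1
  exact Prod.ext h0 h1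

lemma net_unambiguous (a0 : A) (C6 : Finset (A × A)) (f3 f4 f5 : A → A → A)
    (hinj : ∀ i j : Fin 5, i ≠ j →
      Set.InjOn (fun p : A × A =>
        (relayFamily f3 f4 f5 i p.1 p.2, relayFamily f3 f4 f5 j p.1 p.2)) ↑C6) :
    comb.Unambiguous (Fnet a0) (cw f3 f4 f5 '' ↑C6) := by
  intro t ht c hc c' hc' ℓ ℓ' h1 h2 hagree
  obtain ⟨i, j, hij, rfl⟩ := term_surj t ((mem_T_iff t).mp ht)
  obtain ⟨hT6, hdA, htA, hsym, huniq⟩ := tableFacts i j hij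
  obtain ⟨_, hdB, htB, _, _⟩ := tableFacts j i (Ne.symm hij)
  have hEA : ℓ (eIn i j) = ℓ' (eIn i j) := hagree ⟨eIn i j, hdA⟩
  have hEB : ℓ (eIn j i) = ℓ' (eIn j i) := hagree ⟨eIn j i, by rw [← hsym] at hdB; exact hdB⟩
  have hci : c (oE i) = c' (oE i) := by
    rw [← consist_eval a0 c ℓ h1 i _ htA, ← consist_eval a0 c' ℓ' h2 i _ htA, hEA]
  have hcj : c (oE j) = c' (oE j) := by
    rw [← consist_eval a0 c ℓ h1 j _ htB, ← consist_eval a0 c' ℓ' h2 j _ htB, hEB]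
  obtain ⟨w, hw, rfl⟩ := hc
  obtain ⟨w', hw', rfl⟩ := hc'
  rw [cw_oE, cw_oE] at hci hcj
  have := hinj i j hij hw hw' (Prod.ext hci hcj)
  rw [this]

lemma netUB {A : Type} [Fintype A] (hA : Fintype.card A = 3)
    (Cs : Set (comb.outE comb.S → A)) (F : comb.Code A)
    (hU : comb.Unambiguous F Cs) : Cs.ncard ≤ 6 := by
  classical
  have hne : Nonempty A := Fintype.card_pos_iff.mp (by omega)
  obtain ⟨a0⟩ := hne
  have hfin : Cs.Finite := Set.toFinite Cs
  have hinj : ∀ i j : Fin 5, i ≠ j → Set.InjOn (fun c => (c (oE i), c (oE j))) Cs :=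
    fun i j hij => terminal_inj F Cs a0 hU i j hij
  set Cfin := hfin.toFinset with hCfin
  have hCs : ↑Cfin = Cs := hfin.coe_toFinset
  set g : Fin 5 → A × A → A := fun i p =>
    if h : ∃ c, c ∈ Cs ∧ c (oE 0) = p.1 ∧ c (oE 1) = p.2 then h.choose (oE i) else a0
    with hg
  have hgval : ∀ c ∈ Cs, ∀ i : Fin 5, g i (c (oE 0), c (oE 1)) = c (oE i) := by
    intro c hc i
    have hex : ∃ c', c' ∈ Cs ∧ c' (oE 0) = c (oE 0) ∧ c' (oE 1) = c (oE 1) :=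
      ⟨c, hc, rfl, rfl⟩
    rw [hg]
    simp only
    rw [dif_pos hex]
    have : hex.choose = c :=
      hinj 0 1 (by decide) hex.choose_spec.1 hc
        (Prod.ext hex.choose_spec.2.1 hex.choose_spec.2.2)
    rw [this]
  set C2 : Finset (A × A) := Cfin.image (fun c => (c (oE 0), c (oE 1))) with hC2
  have hgInj : ∀ i j : Fin 5, i ≠ j → Set.InjOn (fun p => (g i p, g j p)) ↑C2 := by
    intro i j hij p hp q hq hpq
    simp only [hC2, Finset.coe_image, Set.mem_image, Finset.mem_coe] at hp hq
    obtain ⟨c, hcmem, rfl⟩ := hp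
    obtain ⟨c', hcmem', rfl⟩ := hq
    have hc : c ∈ Cs := by rw [← hCs]; exact_mod_cast hcmem
    have hc' : c' ∈ Cs := by rw [← hCs]; exact_mod_cast hcmem'
    simp only [Prod.mk.injEq, hgval c hc, hgval c' hc'] at hpq
    have : c = c' := hinj i j hij hc hc' (Prod.ext hpq.1 hpq.2)
    rw [this]
  have h6 := keyUB hA C2 g hgInj
  have hC2card : C2.card = Cfin.card := by
    rw [hC2]
    apply Finset.card_image_of_injOn
    intro c hc c' hc' hcc
    exact hinj 0 1 (by decide) (by rw [← hCs]; exact_mod_cast hc)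
      (by rw [← hCs]; exact_mod_cast hc') hcc
  rw [Set.ncard_eq_toFinset_card Cs hfin, ← hCfin]
  omega

lemma part3 {A : Type} [Fintype A] (hA : Fintype.card A = 3) :
    comb.C1 A = Real.logb 3 6 := by
  classical
  have hne : Nonempty A := Fintype.card_pos_iff.mp (by omega)
  obtain ⟨a0⟩ := hne
  have hcast : (Fintype.card A : ℝ) = 3 := by rw [hA]; norm_num
  obtain ⟨C6, f3, f4, f5, hcard, hinj⟩ := part1 hA
  have hmem : Real.logb 3 6 ∈ {x : ℝ | ∃ (C : Set (comb.outE comb.S → A)) (F : comb.Code A),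
      C.Nonempty ∧ comb.Unambiguous F C ∧ x = Real.logb (Fintype.card A) C.ncard} := by
    refine ⟨cw f3 f4 f5 '' ↑C6, Fnet a0, ?_, net_unambiguous a0 C6 f3 f4 f5 hinj, ?_⟩
    · apply Set.Nonempty.image
      rw [Finset.coe_nonempty]
      rw [← Finset.card_pos, hcard]
      norm_num
    · have : (cw f3 f4 f5 '' ↑C6).ncard = 6 := by
        rw [Set.ncard_image_of_injective _ (cw_inj f3 f4 f5), Set.ncard_coe_finset, hcard]
      rw [this, hcast]
      norm_num
  have hub : ∀ x ∈ {x : ℝ | ∃ (C : Set (comb.outE comb.S → A)) (F : comb.Code A),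
      C.Nonempty ∧ comb.Unambiguous F C ∧ x = Real.logb (Fintype.card A) C.ncard},
      x ≤ Real.logb 3 6 := by
    rintro x ⟨C, F, hCne, hU, rfl⟩
    rw [hcast]
    have h6 : C.ncard ≤ 6 := netUB hA C F hU
    have hpos : 0 < C.ncard := (Set.ncard_pos (Set.toFinite C)).mpr hCne
    apply Real.logb_le_logb_of_le (by norm_num : (1:ℝ) < 3)
    · exact_mod_cast hpos
    · exact_mod_cast h6
  rw [Network.C1]
  exact le_antisymm (csSup_le ⟨_, hmem⟩ hub) (le_csSup ⟨_, hub⟩ hmem)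


open Network in
/-- Over a ternary alphabet, the maximum size of a code `C ⊆ A²` for which
there exist `f₃, f₄, f₅ : A² → A` making all ten pairs from
`{proj₁, proj₂, f₃, f₄, f₅}` injective on `C` is exactly 6; hence the one-shot
capacity of the `(5 choose 2)` combination network over a ternary alphabet is
`log₃ 6`. -/
theorem comb_capacity_log3_6_over_ternary {A : Type} [Fintype A] (hA : Fintype.card A = 3) :
    (∃ (C : Finset (A × A)) (f3 f4 f5 : A → A → A), C.card = 6 ∧
      ∀ i j : Fin 5, i ≠ j →
        Set.InjOn (fun p : A × A =>
          (relayFamily f3 f4 f5 i p.1 p.2, relayFamily f3 f4 f5 j p.1 p.2)) ↑C) ∧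
    (∀ (C : Finset (A × A)) (f3 f4 f5 : A → A → A),
      (∀ i j : Fin 5, i ≠ j →
        Set.InjOn (fun p : A × A =>
          (relayFamily f3 f4 f5 i p.1 p.2, relayFamily f3 f4 f5 j p.1 p.2)) ↑C) →
      C.card ≤ 6) ∧
    comb.C1 A = Real.logb 3 6 := by
  refine ⟨part1 hA, ?_, part3 hA⟩
  intro C f3 f4 f5 hinj
  exact keyUB hA C (fun i p => relayFamily f3 f4 f5 i p.1 p.2) hinj
end
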